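/- arXiv:1410.0332 — 7 statements merged into one kernel-verified Lean document; each statement's English description precedes it below -/
import Mathlib

section
/- Let n > 1 and let k be an integer with 1 ≤ k < z_1(n). If z_1(k) = F_t, then z_1(n − k) is equal to F_{t+1} or to F_{t−1}. -/
/-- `IsZeck n l` says that `l` is the Zeckendorf representation of `n`, recorded as the
list of indices of the Fibonacci parts in increasing order: every index is at least `2`,
consecutive indices differ by at least `2` (no two consecutive Fibonacci numbers), and the
corresponding Fibonacci numbers sum to `n`.  The parts of the Zeckendorf representation in
increasing order are then `z₁(n) = Nat.fib l.headI`, `z₂(n) = Nat.fib (l.getD 1 0)`, etc. -/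
def IsZeck (n : ℕ) (l : List ℕ) : Prop :=
  (∀ i ∈ l, 2 ≤ i) ∧ l.Chain' (fun a b => a + 2 ≤ b) ∧ (l.map Nat.fib).sum = n

/-!
Write `n = F_a + n'` where all Zeckendorf indices of `n'` are at least `a + 2`. Then `k < F_a`
and `n - k = (F_a - k) + n'`, so it suffices that `F_a - k` has a Zeckendorf representation
with indices below `a` whose smallest part is `F_{t+1}` or `F_{t-1}`: appending the parts of
`n'` then yields the Zeckendorf representation of `n - k`. This is proved by strong induction
on `a`, peeling off the largest part `F_b` of `k`:
if `b + 3 ≤ a` then `F_a - k = (F_{a-2} - k) + F_{a-1}`;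
if `b + 2 = a` then `F_a - k = F_{a-1} - (k - F_b)`;
if `b + 1 = a` then `F_a - k = F_{a-2} - (k - F_b)`;
and when `k = F_b` the last two cases give `F_{b+1}` and `F_{b-1}` directly.
-/

open List Nat

theorem List.headI_append_of_ne_nil {α : Type*} [Inhabited α] {l₁ : List α} (l₂ : List α)
    (h : l₁ ≠ []) : (l₁ ++ l₂).headI = l₁.headI := by
  cases l₁ with
  | nil => contradiction
  | cons => rfl

theorem isZeck_iff {n : ℕ} {l : List ℕ} :
    IsZeck n l ↔ (∀ i ∈ l, 2 ≤ i) ∧ l.IsChain (· + 2 ≤ ·) ∧ (l.map fib).sum = n :=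
  Iff.rfl

theorem isZeck_singleton_iff {n b : ℕ} : IsZeck n [b] ↔ 2 ≤ b ∧ fib b = n := by
  simp [isZeck_iff]

theorem isZeck_append_iff {n : ℕ} {l₁ l₂ : List ℕ} :
    IsZeck n (l₁ ++ l₂) ↔ ∃ n₁ n₂, IsZeck n₁ l₁ ∧ IsZeck n₂ l₂ ∧
      (∀ x ∈ l₁.getLast?, ∀ y ∈ l₂.head?, x + 2 ≤ y) ∧ n₁ + n₂ = n := by
  simp only [isZeck_iff, mem_append, isChain_append, map_append, List.sum_append]
  constructor
  · rintro ⟨h2, ⟨hc₁, hc₂, hsep⟩, rfl⟩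
    exact ⟨_, _, ⟨fun i hi => h2 i (.inl hi), hc₁, rfl⟩, ⟨fun i hi => h2 i (.inr hi), hc₂, rfl⟩,
      hsep, rfl⟩
  · rintro ⟨_, _, ⟨h2₁, hc₁, rfl⟩, ⟨h2₂, hc₂, rfl⟩, hsep, rfl⟩
    exact ⟨fun i hi => hi.elim (h2₁ i) (h2₂ i), ⟨hc₁, hc₂, hsep⟩, rfl⟩

namespace IsZeck

variable {n m : ℕ} {l l₁ l₂ : List ℕ}

theorem ne_nil (h : IsZeck n l) (hn : n ≠ 0) : l ≠ [] := by
  rintro rfl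
  exact hn h.2.2.symm

theorem two_le_headI (h : IsZeck n l) (hl : l ≠ []) : 2 ≤ l.headI := by
  obtain ⟨a, l, rfl⟩ := exists_cons_of_ne_nil hl
  exact h.1 a mem_cons_self

theorem isZeckendorfRep_reverse (h : IsZeck n l) : l.reverse.IsZeckendorfRep := by
  obtain ⟨h2, hc, _⟩ := h
  rw [IsZeckendorfRep, ← reverse_cons, isChain_reverse, isChain_cons]
  refine ⟨fun y hy => ?_, hc⟩
  have := h2 y (mem_of_mem_head? hy)
  omega

theorem unique (h₁ : IsZeck n l₁) (h₂ : IsZeck n l₂) : l₁ = l₂ := by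
  have hrev : ∀ {l}, IsZeck n l → l.reverse = zeckendorf n := fun hl => by
    rw [← hl.2.2, ← sum_reverse, ← map_reverse, zeckendorf_sum_fib hl.isZeckendorfRep_reverse]
  exact reverse_injective ((hrev h₁).trans (hrev h₂).symm)

theorem lt_fib (h : IsZeck n l) (hm : m ≠ 0) (hl : ∀ i ∈ l.getLast?, i < m) : n < fib m := by
  rw [← h.2.2, ← sum_reverse, ← map_reverse]
  refine h.isZeckendorfRep_reverse.sum_fib_lt fun i hi => ?_
  cases hlast : l.getLast? <;> simp_all; omega

end IsZeck

def FibSubZeck (a k t : ℕ) : Prop :=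
  ∃ l, IsZeck (fib a - k) l ∧ (∀ i ∈ l.getLast?, i < a) ∧
    (fib l.headI = fib (t + 1) ∨ fib l.headI = fib (t - 1))

namespace FibSubZeck

variable {a c k k' t : ℕ}

theorem of_fib_sub_eq (h : FibSubZeck c k t) (hca : c ≤ a) (heq : fib a - k' = fib c - k) :
    FibSubZeck a k' t := by
  obtain ⟨l, hl, hlast, hhead⟩ := h
  exact ⟨l, heq ▸ hl, fun i hi => (hlast i hi).trans_le hca, hhead⟩

theorem add_two (h : FibSubZeck a k t) (hk : k < fib a) : FibSubZeck (a + 2) k t := by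
  obtain ⟨l, hl, hlast, hhead⟩ := h
  have ha : a ≠ 0 := by rintro rfl; simp at hk
  refine ⟨l ++ [a + 1], isZeck_append_iff.2 ⟨_, _, hl, isZeck_singleton_iff.2 ⟨by omega, rfl⟩,
    fun x hx y hy => ?_, ?_⟩, by simp, ?_⟩
  · simp only [head?_cons, Option.mem_some_iff] at hy
    have := hlast x hx
    omega
  · rw [fib_add_two]
    omega
  · rwa [headI_append_of_ne_nil _ (hl.ne_nil (by omega))]

end FibSubZeck

theorem fibSubZeck_add_two_fib {b : ℕ} (hb : 2 ≤ b) : FibSubZeck (b + 2) (fib b) b :=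
  ⟨[b + 1], isZeck_singleton_iff.2 ⟨by omega, by rw [fib_add_two]; omega⟩, by simp, by simp⟩

theorem fibSubZeck_add_one_fib {b : ℕ} (hb : 2 ≤ b) : FibSubZeck (b + 1) (fib b) b := by
  obtain ⟨c, rfl⟩ : ∃ c, b = c + 1 := ⟨b - 1, by omega⟩
  -- `max 2 c` rather than `c`, since index `1` is not admissible but `F_1 = F_2`.
  have hmax : fib (max 2 c) = fib c := by
    obtain rfl | hc : c = 1 ∨ 2 ≤ c := by omega
    · rfl
    · rw [max_eq_right hc]
  have hsub : fib (c + 1 + 1) - fib (c + 1) = fib c := by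
    rw [fib_add_two]
    omega
  exact ⟨[max 2 c], isZeck_singleton_iff.2 ⟨le_max_left _ _, hmax.trans hsub.symm⟩,
    by simp; omega, .inr hmax⟩

theorem fibSubZeck_of_isZeck {a k : ℕ} {lk : List ℕ} (hlk : IsZeck k lk) (hne : lk ≠ [])
    (hka : k < fib a) : FibSubZeck a k lk.headI := by
  induction a using Nat.strong_induction_on generalizing k lk with
  | _ a ih =>
  obtain ⟨lk₀, b, rfl⟩ := (eq_nil_or_concat' lk).resolve_left hne
  have hk_lt : k < fib (b + 1) := hlk.lt_fib (by omega) (by simp)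
  obtain ⟨k₀, _, hk₀, hb, hsep, rfl⟩ := isZeck_append_iff.1 hlk
  obtain ⟨hb2, rfl⟩ := isZeck_singleton_iff.1 hb
  have hba : b < a := (fib_lt_fib hb2).1 (by omega)
  have hk₀_lt : k₀ < fib (b - 1) :=
    hk₀.lt_fib (by omega) fun x hx => by have := hsep x hx b rfl; omega
  obtain hab | rfl | rfl : b + 3 ≤ a ∨ a = b + 2 ∨ a = b + 1 := by omega
  · obtain ⟨c, rfl⟩ : ∃ c, a = c + 2 := ⟨a - 2, by omega⟩
    have hkc : k₀ + fib b < fib c := hk_lt.trans_le (fib_mono (by omega))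
    exact (ih c (by omega) hlk hne hkc).add_two hkc
  · rcases eq_or_ne lk₀ [] with rfl | hne₀
    · obtain rfl : k₀ = 0 := hk₀.2.2.symm
      simpa using fibSubZeck_add_two_fib hb2
    · rw [headI_append_of_ne_nil _ hne₀]
      have hk₀_lt' : k₀ < fib (b + 1) := hk₀_lt.trans_le (fib_mono (by omega))
      refine (ih (b + 1) (by omega) hk₀ hne₀ hk₀_lt').of_fib_sub_eq (by omega) ?_
      rw [fib_add_two]
      omega
  · rcases eq_or_ne lk₀ [] with rfl | hne₀
    · obtain rfl : k₀ = 0 := hk₀.2.2.symm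
      simpa using fibSubZeck_add_one_fib hb2
    · rw [headI_append_of_ne_nil _ hne₀]
      refine (ih (b - 1) (by omega) hk₀ hne₀ hk₀_lt).of_fib_sub_eq (by omega) ?_
      obtain ⟨c, rfl⟩ : ∃ c, b = c + 1 := ⟨b - 1, by omega⟩
      rw [Nat.add_sub_cancel, fib_add_two]
      omega

theorem z1_sub_eq_fib_succ_or_fib_pred_general (n k t : ℕ) (ln lk lm : List ℕ)
    (hln : IsZeck n ln) (hlk : IsZeck k lk) (hlm : IsZeck (n - k) lm)
    (hk2 : k < Nat.fib ln.headI)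
    (ht : 2 ≤ t) (hzk : Nat.fib lk.headI = Nat.fib t) :
    Nat.fib lm.headI = Nat.fib (t + 1) ∨ Nat.fib lm.headI = Nat.fib (t - 1) := by
  obtain ⟨a, L, rfl⟩ := exists_cons_of_ne_nil (show ln ≠ [] by rintro rfl; simp at hk2)
  rw [headI_cons] at hk2
  have hlk_ne : lk ≠ [] := by
    rintro rfl
    have := fib_pos.2 (show 0 < t by omega)
    simp_all
  have hzt : lk.headI = t := fib_strictMonoOn.injOn (hlk.two_le_headI hlk_ne) ht hzk
  obtain ⟨l, hl, hla, hhead⟩ := fibSubZeck_of_isZeck hlk hlk_ne hk2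
  obtain ⟨_, nL, ha, hL, haL, rfl⟩ := isZeck_append_iff.1 (show IsZeck n ([a] ++ L) from hln)
  obtain ⟨-, rfl⟩ := isZeck_singleton_iff.1 ha
  have hlL : IsZeck (fib a + nL - k) (l ++ L) :=
    isZeck_append_iff.2 ⟨_, _, hl, hL, fun x hx y hy => by
      have := hla x hx; have := haL a rfl y hy; omega, by omega⟩
  rw [hlm.unique hlL, headI_append_of_ne_nil _ (hl.ne_nil (by omega)), ← hzt]
  exact hhead

/-- Let `n > 1` and let `k` be an integer with `1 ≤ k < z₁(n)`.  If `z₁(k) = F_t`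
(`t` being a Zeckendorf index, so `t ≥ 2`), then `z₁(n - k)` is equal to `F_{t+1}`
or to `F_{t-1}`. -/
theorem z1_sub_eq_fib_succ_or_fib_pred (n k t : ℕ) (ln lk lm : List ℕ)
    (hln : IsZeck n ln) (hlk : IsZeck k lk) (hlm : IsZeck (n - k) lm)
    (hn : 1 < n) (hk1 : 1 ≤ k) (hk2 : k < Nat.fib ln.headI)
    (ht : 2 ≤ t) (hzk : Nat.fib lk.headI = Nat.fib t) :
    Nat.fib lm.headI = Nat.fib (t + 1) ∨ Nat.fib lm.headI = Nat.fib (t - 1) :=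
  z1_sub_eq_fib_succ_or_fib_pred_general n k t ln lk lm hln hlk hlm hk2 ht hzk
end

section
/- For every positive integer n, the starting position of Fibonacci nim with n stones is a losing position for the first player, i.e. 𝒢(n, n − 1) = 0, if and only if n is a Fibonacci number. -/
/-- The Grundy values of single-heap Fibonacci nim positions `(n, r)`, where `n` is the heap
size and `r` is the maximal number of tokens that may be removed on the next move:
`grundy n r` is the least natural number not of the form
`grundy (n - k) (min (2 * k) (n - k))` for some `k` with `1 ≤ k ≤ min r n`.
In particular `grundy 0 r = 0` and `grundy n 0 = 0`. -/
noncomputable def grundy (n r : ℕ) : ℕ :=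
  sInf {m : ℕ | ∀ k, 1 ≤ k → k ≤ min r n → grundy (n - k) (min (2 * k) (n - k)) ≠ m}
termination_by n
decreasing_by
  have : k ≤ n := le_trans ‹k ≤ min r n› (min_le_right _ _)
  omega

/-- Index of the largest Fibonacci number `≤ n` (at least 2, for `n ≥ 1`). -/
def maxFibIdx (n : ℕ) : ℕ := Nat.findGreatest (fun j => Nat.fib j ≤ n) (n + 2)

lemma sub_one_le_fib (j : ℕ) (hj : 2 ≤ j) : j - 1 ≤ Nat.fib j := by
  rcases lt_or_ge j 5 with h | h
  · interval_cases j <;> decide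
  · have := Nat.le_fib_self h
    omega

lemma maxFibIdx_spec (n : ℕ) (hn : 1 ≤ n) :
    2 ≤ maxFibIdx n ∧ Nat.fib (maxFibIdx n) ≤ n ∧ n < Nat.fib (maxFibIdx n + 1) := by
  unfold maxFibIdx
  have h2 : 2 ≤ Nat.findGreatest (fun j => Nat.fib j ≤ n) (n + 2) :=
    Nat.le_findGreatest (m := 2) (by omega) (by simpa using hn)
  have hle : Nat.fib (Nat.findGreatest (fun j => Nat.fib j ≤ n) (n + 2)) ≤ n := by
    have := Nat.findGreatest_spec (P := fun j => Nat.fib j ≤ n) (m := 2) (n := n + 2)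
      (by omega) (by simpa using hn)
    exact this
  refine ⟨h2, hle, ?_⟩
  set J := Nat.findGreatest (fun j => Nat.fib j ≤ n) (n + 2) with hJdef
  by_contra hcon
  push_neg at hcon
  have hidx : J + 1 ≤ n + 2 := by
    have := sub_one_le_fib J h2
    omega
  exact Nat.findGreatest_is_greatest (P := fun j => Nat.fib j ≤ n) (n := n + 2)
    (by omega) hidx hcon

lemma maxFibIdx_unique (n J : ℕ) (hJ : 2 ≤ J) (h1 : Nat.fib J ≤ n)
    (h2 : n < Nat.fib (J + 1)) : maxFibIdx n = J := by
  have hn : 1 ≤ n := le_trans (Nat.fib_pos.2 (by omega)) h1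
  obtain ⟨g2, gle, glt⟩ := maxFibIdx_spec n hn
  rcases lt_trichotomy (maxFibIdx n) J with h | h | h
  · exfalso
    have : Nat.fib (maxFibIdx n + 1) ≤ Nat.fib J := Nat.fib_mono (by omega)
    omega
  · exact h
  · exfalso
    have : Nat.fib (J + 1) ≤ Nat.fib (maxFibIdx n) := Nat.fib_mono (by omega)
    omega

/-- The least summand in the Zeckendorf representation of `n` (0 for `n = 0`). -/
def L (n : ℕ) : ℕ :=
  if hn : n = 0 then 0
  else if Nat.fib (maxFibIdx n) = n then n
  else L (n - Nat.fib (maxFibIdx n))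
termination_by n
decreasing_by
  have h := maxFibIdx_spec n (by omega)
  have : 0 < Nat.fib (maxFibIdx n) := Nat.fib_pos.2 (by omega)
  omega

lemma L_zero : L 0 = 0 := by rw [L]; simp

lemma L_eq_self {n : ℕ} (hn : n ≠ 0) (h : Nat.fib (maxFibIdx n) = n) : L n = n := by
  rw [L]; simp [hn, h]

lemma L_step {n : ℕ} (hn : n ≠ 0) (h : Nat.fib (maxFibIdx n) ≠ n) :
    L n = L (n - Nat.fib (maxFibIdx n)) := by
  rw [L]; simp [hn, h]

lemma L_le (n : ℕ) : L n ≤ n := by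
  induction n using Nat.strong_induction_on with
  | _ n ih =>
    rcases eq_or_ne n 0 with rfl | hn
    · simp [L_zero]
    rcases eq_or_ne (Nat.fib (maxFibIdx n)) n with h | h
    · rw [L_eq_self hn h]
    · rw [L_step hn h]
      have hs := maxFibIdx_spec n (by omega)
      have hfpos : 0 < Nat.fib (maxFibIdx n) := Nat.fib_pos.2 (by omega)
      have := ih (n - Nat.fib (maxFibIdx n)) (by omega)
      omega

lemma L_pos {n : ℕ} (hn : 0 < n) : 0 < L n := by
  induction n using Nat.strong_induction_on with
  | _ n ih =>
    rcases eq_or_ne (Nat.fib (maxFibIdx n)) n with h | h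
    · rw [L_eq_self (by omega) h]; exact hn
    · rw [L_step (by omega) h]
      have hs := maxFibIdx_spec n hn
      have hfpos : 0 < Nat.fib (maxFibIdx n) := Nat.fib_pos.2 (by omega)
      exact ih _ (by omega) (by omega)

lemma L_is_fib (n : ℕ) : ∃ t, Nat.fib t = L n := by
  induction n using Nat.strong_induction_on with
  | _ n ih =>
    rcases eq_or_ne n 0 with rfl | hn
    · exact ⟨0, by simp [L_zero]⟩
    rcases eq_or_ne (Nat.fib (maxFibIdx n)) n with h | h
    · rw [L_eq_self hn h]; exact ⟨maxFibIdx n, h⟩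
    · rw [L_step hn h]
      have hs := maxFibIdx_spec n (by omega)
      have hfpos : 0 < Nat.fib (maxFibIdx n) := Nat.fib_pos.2 (by omega)
      exact ih _ (by omega)

lemma L_fib {t : ℕ} (ht : 2 ≤ t) : L (Nat.fib t) = Nat.fib t := by
  have h1 : 0 < Nat.fib t := Nat.fib_pos.2 (by omega)
  have h2 : Nat.fib t < Nat.fib (t + 1) := Nat.fib_lt_fib_succ ht
  have := maxFibIdx_unique (Nat.fib t) t ht le_rfl h2
  exact L_eq_self (by omega) (by rw [this])

lemma L_of_fib_eq {n : ℕ} (hn : 0 < n) (h : ∃ t, Nat.fib t = n) : L n = n := by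
  obtain ⟨t, rfl⟩ := h
  rcases le_or_gt 2 t with ht | ht
  · exact L_fib ht
  · interval_cases t
    · simp at hn
    · exact L_fib (t := 2) (by norm_num)

lemma L_fib_add {J x : ℕ} (hJ : 2 ≤ J) (hx : 0 < x) (hlt : x < Nat.fib (J - 1)) :
    L (Nat.fib J + x) = L x := by
  have hJ1 : Nat.fib (J + 1) = Nat.fib (J - 1) + Nat.fib J := by
    have := Nat.fib_add_two (n := J - 1)
    rw [show J - 1 + 1 = J by omega, show J - 1 + 2 = J + 1 by omega] at this
    exact this
  have hmax : maxFibIdx (Nat.fib J + x) = J :=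
    maxFibIdx_unique _ J hJ (by omega) (by omega)
  have hfpos : 0 < Nat.fib J := Nat.fib_pos.2 (by omega)
  rw [L_step (by omega) (by rw [hmax]; omega), hmax]
  congr 1
  omega

lemma L_fib_sub : ∀ J : ℕ, 2 ≤ J → ∀ k, 1 ≤ k → k < Nat.fib J →
    L (Nat.fib J - k) ≤ 2 * k := by
  intro J
  induction J using Nat.strong_induction_on with
  | _ J ih =>
    intro hJ k hk1 hk2
    rcases lt_or_ge J 4 with h4 | h4
    · interval_cases J
      · have h2 : Nat.fib 2 = 1 := by decide
        omega
      · have h3 : Nat.fib 3 = 2 := by decide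
        have hk : k = 1 := by omega
        subst hk
        have hL1 : L 1 = 1 := L_of_fib_eq (by norm_num) ⟨2, by decide⟩
        have : Nat.fib 3 - 1 = 1 := by decide
        rw [this, hL1]
        omega
    · have hsplit : Nat.fib J = Nat.fib (J - 2) + Nat.fib (J - 1) := by
        have := Nat.fib_add_two (n := J - 2)
        rw [show J - 2 + 2 = J by omega, show J - 2 + 1 = J - 1 by omega] at this
        exact this
      rcases lt_trichotomy k (Nat.fib (J - 2)) with hlt | heq | hgt
      · have hx : Nat.fib J - k = Nat.fib (J - 1) + (Nat.fib (J - 2) - k) := by omega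
        rw [hx, L_fib_add (by omega) (by omega)
          (by rw [show J - 1 - 1 = J - 2 by omega]; omega)]
        exact ih (J - 2) (by omega) (by omega) k hk1 hlt
      · have hx : Nat.fib J - k = Nat.fib (J - 1) := by omega
        rw [hx, L_fib (by omega)]
        have h1 : Nat.fib (J - 1) = Nat.fib (J - 3) + Nat.fib (J - 2) := by
          have := Nat.fib_add_two (n := J - 3)
          rw [show J - 3 + 2 = J - 1 by omega, show J - 3 + 1 = J - 2 by omega] at this
          exact this
        have h2 : Nat.fib (J - 3) ≤ Nat.fib (J - 2) := Nat.fib_mono (by omega)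
        omega
      · have hx : Nat.fib J - k = Nat.fib (J - 1) - (k - Nat.fib (J - 2)) := by omega
        rw [hx]
        have := ih (J - 1) (by omega) (by omega) (k - Nat.fib (J - 2))
          (by omega) (by omega)
        omega

lemma L_sub_le : ∀ n k : ℕ, 1 ≤ k → k < L n → L (n - k) ≤ 2 * k := by
  intro n
  induction n using Nat.strong_induction_on with
  | _ n ih =>
    intro k hk1 hk2
    have hn : n ≠ 0 := by
      rintro rfl; rw [L_zero] at hk2; omega
    have hs := maxFibIdx_spec n (by omega)
    rcases eq_or_ne (Nat.fib (maxFibIdx n)) n with h | h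
    · rw [← h]
      rw [L_eq_self hn h] at hk2
      exact L_fib_sub (maxFibIdx n) hs.1 k hk1 (by omega)
    · have hfpos : 0 < Nat.fib (maxFibIdx n) := Nat.fib_pos.2 (by omega)
      set J := maxFibIdx n with hJ
      set m := n - Nat.fib J with hm
      have hLn : L n = L m := L_step hn h
      have hm1 : 1 ≤ m := by omega
      have hmlt : m < Nat.fib (J - 1) := by
        have : Nat.fib (J + 1) = Nat.fib (J - 1) + Nat.fib J := by
          have := Nat.fib_add_two (n := J - 1)
          rw [show J - 1 + 1 = J by omega, show J - 1 + 2 = J + 1 by omega] at this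
          omega
        omega
      have hJ3 : 3 ≤ J := by
        by_contra hc
        have : J = 2 := by omega
        rw [this] at hmlt
        simp [Nat.fib] at hmlt
        omega
      rw [hLn] at hk2
      have hkm : k < m := lt_of_lt_of_le hk2 (L_le m)
      have hx : n - k = Nat.fib J + (m - k) := by omega
      rw [hx, L_fib_add (by omega) (by omega) (by omega)]
      exact ih m (by omega) k hk1 hk2

lemma L_gap : ∀ n : ℕ, 0 < n → L n < n → 2 * L n < L (n - L n) := by
  intro n
  induction n using Nat.strong_induction_on with
  | _ n ih =>
    intro hn hLn
    have hs := maxFibIdx_spec n hn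
    rcases eq_or_ne (Nat.fib (maxFibIdx n)) n with h | h
    · exfalso; rw [L_eq_self (by omega) h] at hLn; omega
    · have hfpos : 0 < Nat.fib (maxFibIdx n) := Nat.fib_pos.2 (by omega)
      set J := maxFibIdx n with hJ
      set m := n - Nat.fib J with hm
      have hLeq : L n = L m := L_step (by omega) h
      have hm1 : 1 ≤ m := by omega
      have hmlt : m < Nat.fib (J - 1) := by
        have : Nat.fib (J + 1) = Nat.fib (J - 1) + Nat.fib J := by
          have := Nat.fib_add_two (n := J - 1)
          rw [show J - 1 + 1 = J by omega, show J - 1 + 2 = J + 1 by omega] at this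
          omega
        omega
      have hJ3 : 3 ≤ J := by
        by_contra hc
        have : J = 2 := by omega
        rw [this] at hmlt
        simp [Nat.fib] at hmlt
        omega
      have hLm_le := L_le m
      have hLm_pos := L_pos (n := m) (by omega)
      rcases eq_or_lt_of_le hLm_le with heq | hlt
      · -- L m = m, so m is a Fibonacci number
        obtain ⟨t, ht⟩ := L_is_fib m
        rw [heq] at ht
        have ht2 : ∃ t', 2 ≤ t' ∧ Nat.fib t' = m := by
          rcases le_or_gt 2 t with h' | h'
          · exact ⟨t, h', ht⟩
          · interval_cases t
            · simp at ht; omega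
            · exact ⟨2, le_rfl, by simpa using ht⟩
        obtain ⟨t', ht2', htm⟩ := ht2
        have hsub : n - L n = Nat.fib J := by rw [hLeq, heq]; omega
        rw [hsub, L_fib (by omega), hLeq, heq]
        have htJ : t' < J - 1 := by
          by_contra hc
          have : Nat.fib (J - 1) ≤ Nat.fib t' := Nat.fib_mono (by omega)
          omega
        have h1 : Nat.fib t' < Nat.fib (t' + 1) := Nat.fib_lt_fib_succ ht2'
        have h2 : Nat.fib (t' + 2) = Nat.fib t' + Nat.fib (t' + 1) := Nat.fib_add_two
        have h3 : Nat.fib (t' + 2) ≤ Nat.fib J := Nat.fib_mono (by omega)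
        omega
      · -- L m < m
        have hIH := ih m (by omega) (by omega) hlt
        have hsub : n - L n = Nat.fib J + (m - L m) := by rw [hLeq]; omega
        rw [hsub, L_fib_add (by omega) (by omega) (by omega), hLeq]
        exact hIH

/-! ### Grundy side -/

lemma grundy_unfold (n r : ℕ) : grundy n r =
    sInf {m : ℕ | ∀ k, 1 ≤ k → k ≤ min r n → grundy (n - k) (min (2 * k) (n - k)) ≠ m} := by
  rw [grundy]

lemma grundy_set_nonempty (n r : ℕ) :
    {m : ℕ | ∀ k, 1 ≤ k → k ≤ min r n → grundy (n - k) (min (2 * k) (n - k)) ≠ m}.Nonempty := by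
  classical
  set B : Finset ℕ := (Finset.Icc 1 (min r n)).image
    (fun k => grundy (n - k) (min (2 * k) (n - k))) with hB
  refine ⟨B.sup id + 1, ?_⟩
  intro k hk1 hk2 hcon
  have hmem : grundy (n - k) (min (2 * k) (n - k)) ∈ B :=
    Finset.mem_image.2 ⟨k, Finset.mem_Icc.2 ⟨hk1, hk2⟩, rfl⟩
  have := Finset.le_sup (f := id) hmem
  simp only [id] at this
  omega

lemma grundy_zero_iff (n r : ℕ) : grundy n r = 0 ↔
    ∀ k, 1 ≤ k → k ≤ min r n → grundy (n - k) (min (2 * k) (n - k)) ≠ 0 := by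
  rw [grundy_unfold, Nat.sInf_eq_zero]
  constructor
  · rintro (h | h)
    · exact h
    · exact absurd h (Set.nonempty_iff_ne_empty.1 (grundy_set_nonempty n r))
  · exact Or.inl

lemma grundy_eq_zero_iff : ∀ n r : ℕ, grundy n r = 0 ↔ (n = 0 ∨ r < L n) := by
  intro n
  induction n using Nat.strong_induction_on with
  | _ n ih =>
    intro r
    rcases eq_or_ne n 0 with rfl | hn
    · simp only [eq_self_iff_true, true_or, iff_true]
      rw [grundy_zero_iff]
      intro k hk1 hk2
      simp at hk2
      omega
    · rw [grundy_zero_iff]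
      constructor
      · intro h
        by_contra hcon
        push_neg at hcon
        obtain ⟨-, hr⟩ := hcon
        have hLpos : 0 < L n := L_pos (by omega)
        have hLle : L n ≤ n := L_le n
        refine h (L n) hLpos (by omega) ?_
        rw [ih (n - L n) (by omega)]
        rcases eq_or_ne (n - L n) 0 with h0 | h0
        · exact Or.inl h0
        · right
          have := L_gap n (by omega) (by omega)
          omega
      · intro h k hk1 hk2
        have hr : r < L n := by tauto
        have hkLn : k < L n := by omega
        have hLle : L n ≤ n := L_le n
        have hnk : 0 < n - k := by omega
        rw [ne_eq, ih (n - k) (by omega)]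
        push_neg
        refine ⟨by omega, ?_⟩
        have h1 : L (n - k) ≤ 2 * k := L_sub_le n k hk1 hkLn
        have h2 : L (n - k) ≤ n - k := L_le (n - k)
        omega


/-- For every positive integer `n`, the starting position of Fibonacci nim with `n` stones is
a losing position for the first player, i.e. `𝒢(n, n - 1) = 0`, if and only if `n` is a
Fibonacci number. -/
theorem grundy_start_eq_zero_iff_fib (n : ℕ) (hn : 0 < n) :
    grundy n (n - 1) = 0 ↔ ∃ t, Nat.fib t = n := by
  rw [grundy_eq_zero_iff]
  constructor
  · rintro (h | h)
    · omega
    · have h1 : L n ≤ n := L_le n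
      have h2 : L n = n := by omega
      obtain ⟨t, ht⟩ := L_is_fib n
      exact ⟨t, by omega⟩
  · intro h
    right
    have := L_of_fib_eq hn h
    omega
end

section
/- For every positive integer n and every natural number r, 𝒢(n, r) = 1 if and only if z_1(n) = 1, r ≥ 1, and either the Zeckendorf representation of n has only one part or r < z_2(n). -/
open Nat

theorem Nat.sInf_compl_eq_zero_iff {s : Set ℕ} (hs : s.Finite) : sInf sᶜ = 0 ↔ 0 ∉ s := by
  rw [Nat.sInf_eq_zero, Set.mem_compl_iff, or_iff_left hs.infinite_compl.nonempty.ne_empty]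

theorem Nat.sInf_compl_eq_one_iff {s : Set ℕ} : sInf sᶜ = 1 ↔ 0 ∈ s ∧ 1 ∉ s := by
  constructor
  · intro h
    refine ⟨by_contra fun h0 => ?_, h ▸ Nat.sInf_mem (Nat.nonempty_of_sInf_eq_succ h)⟩
    have := Nat.sInf_le (show 0 ∈ sᶜ from h0)
    omega
  · rintro ⟨h0, h1⟩
    refine le_antisymm (Nat.sInf_le h1) (Nat.one_le_iff_ne_zero.2 fun h => ?_)
    rcases Nat.sInf_eq_zero.1 h with h | h
    · exact h h0
    · exact Set.eq_empty_iff_forall_notMem.1 h 1 h1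

def grundyOptions (n r : ℕ) : Set ℕ :=
  (fun k => grundy (n - k) (min (2 * k) (n - k))) '' Set.Icc 1 (min r n)

theorem grundy_eq_sInf_compl (n r : ℕ) : grundy n r = sInf (grundyOptions n r)ᶜ := by
  rw [grundy]
  congr 1
  ext m
  simp [grundyOptions, and_imp]

theorem grundy_eq_zero_iff_zero_notMem (n r : ℕ) : grundy n r = 0 ↔ 0 ∉ grundyOptions n r :=
  grundy_eq_sInf_compl n r ▸ Nat.sInf_compl_eq_zero_iff ((Set.finite_Icc _ _).image _)

theorem grundy_eq_one_iff_zero_mem (n r : ℕ) :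
    grundy n r = 1 ↔ 0 ∈ grundyOptions n r ∧ 1 ∉ grundyOptions n r :=
  grundy_eq_sInf_compl n r ▸ Nat.sInf_compl_eq_one_iff

theorem grundy_zero_left (r : ℕ) : grundy 0 r = 0 := by
  simp [grundy_eq_zero_iff_zero_notMem, grundyOptions]

theorem two_mul_fib_lt_fib {a b : ℕ} (ha : 2 ≤ a) (hab : a + 2 ≤ b) : 2 * fib a < fib b :=
  calc 2 * fib a < fib a + fib (a + 1) := by linarith [fib_lt_fib_succ ha]
    _ = fib (a + 2) := fib_add_two.symm
    _ ≤ fib b := fib_mono hab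

theorem eq_two_of_fib_eq_one {a : ℕ} (ha : 2 ≤ a) (h : fib a = 1) : a = 2 := by
  by_contra hne
  have := (fib_lt_fib (le_refl 2)).2 (show 2 < a by omega)
  simp [h] at this

theorem isZeck_iff_pairwise {n : ℕ} {l : List ℕ} :
    IsZeck n l ↔ (0 :: l).Pairwise (· + 2 ≤ ·) ∧ (l.map fib).sum = n := by
  have : IsTrans ℕ (· + 2 ≤ ·) := ⟨fun _ _ _ h h' => by omega⟩
  change (∀ i ∈ l, 2 ≤ i) ∧ l.IsChain (· + 2 ≤ ·) ∧ _ ↔ _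
  simp only [List.isChain_iff_pairwise, List.pairwise_cons, zero_add, and_assoc]

theorem isZeck_iff_isZeckendorfRep_reverse {n : ℕ} {l : List ℕ} :
    IsZeck n l ↔ l.reverse.IsZeckendorfRep ∧ (l.map fib).sum = n := by
  have : IsTrans ℕ (· + 2 ≤ ·) := ⟨fun _ _ _ h h' => by omega⟩
  rw [isZeck_iff_pairwise, List.IsZeckendorfRep, ← List.reverse_cons, List.isChain_reverse,
    List.isChain_iff_pairwise]

theorem isZeck_reverse_zeckendorf (n : ℕ) : IsZeck n n.zeckendorf.reverse :=
  isZeck_iff_isZeckendorfRep_reverse.2 ⟨by simpa using isZeckendorfRep_zeckendorf n, by simp⟩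

theorem IsZeck.eq_reverse_zeckendorf {n : ℕ} {l : List ℕ} (h : IsZeck n l) :
    l = n.zeckendorf.reverse := by
  obtain ⟨hl, rfl⟩ := isZeck_iff_isZeckendorfRep_reverse.1 h
  rw [← List.sum_reverse, ← List.map_reverse, zeckendorf_sum_fib hl, List.reverse_reverse]

theorem isZeck_nil_iff {n : ℕ} : IsZeck n [] ↔ n = 0 := by
  simp [isZeck_iff_pairwise, eq_comm]

theorem isZeck_cons_iff {n a : ℕ} {t : List ℕ} :
    IsZeck n (a :: t) ↔ 2 ≤ a ∧ (∀ b ∈ t, a + 2 ≤ b) ∧ fib a ≤ n ∧ IsZeck (n - fib a) t := by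
  simp only [isZeck_iff_pairwise, List.pairwise_cons, List.mem_cons, forall_eq_or_imp,
    List.map_cons, List.sum_cons, zero_add]
  constructor
  · rintro ⟨⟨⟨ha, ht2⟩, hat, ht⟩, rfl⟩
    exact ⟨ha, hat, by omega, ⟨ht2, ht⟩, by omega⟩
  · rintro ⟨ha, hat, han, ⟨ht2, ht⟩, hsum⟩
    exact ⟨⟨⟨ha, ht2⟩, hat, ht⟩, by omega⟩

theorem IsZeck.unique_s6 {n : ℕ} {l l' : List ℕ} (h : IsZeck n l) (h' : IsZeck n l') : l = l' :=
  h.eq_reverse_zeckendorf.trans h'.eq_reverse_zeckendorf.symm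

theorem exists_isZeck_cons {n : ℕ} (hn : 0 < n) : ∃ c u, IsZeck n (c :: u) := by
  obtain ⟨c, u, h⟩ := List.exists_cons_of_ne_nil fun h =>
    hn.ne' (isZeck_nil_iff.1 (h ▸ isZeck_reverse_zeckendorf n))
  exact ⟨c, u, h ▸ isZeck_reverse_zeckendorf n⟩

theorem IsZeck.cons {s a : ℕ} {t : List ℕ} (ht : IsZeck s t) (ha : 2 ≤ a)
    (hat : ∀ b ∈ t, a + 2 ≤ b) : IsZeck (fib a + s) (a :: t) :=
  isZeck_cons_iff.2 ⟨ha, hat, by omega, by simpa using ht⟩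

theorem fib_add_one_le_two_mul {m : ℕ} (hm : m ≠ 0) : fib (m + 1) ≤ 2 * fib m := by
  obtain ⟨m, rfl⟩ := exists_eq_succ_of_ne_zero hm
  linarith [fib_add_two (n := m), fib_le_fib_succ (n := m)]

theorem exists_isZeck_fib_sub_add {i j s : ℕ} {t : List ℕ} (ht : IsZeck s t)
    (hti : ∀ b ∈ t, i + 1 ≤ b) (hj : 1 ≤ j) (hji : j < fib i) :
    ∃ c u, IsZeck (fib i - j + s) (c :: u) ∧ fib c ≤ 2 * j := by
  induction i using Nat.strong_induction_on generalizing j s t with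
  | _ i ih =>
  have hi : 2 ≤ i := by
    by_contra! hi
    have : fib i ≤ fib 1 := fib_mono (by omega)
    rw [fib_one] at this
    omega
  obtain ⟨m, rfl⟩ : ∃ m, i = m + 2 := ⟨i - 2, by omega⟩
  have hfib : fib (m + 2) = fib m + fib (m + 1) := fib_add_two
  rcases lt_trichotomy j (fib m) with hjm | rfl | hjm
  · have hm : m ≠ 0 := by rintro rfl; simp at hjm
    obtain ⟨c, u, hu, hc⟩ := ih m (by omega)
      (ht.cons (a := m + 1) (by omega) fun b hb => by have := hti b hb; omega)
      (by simpa using fun b hb => by have := hti b hb; omega) hj hjm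
    rw [show fib m - j + (fib (m + 1) + s) = fib (m + 2) - j + s by omega] at hu
    exact ⟨c, u, hu, hc⟩
  · have hm : m ≠ 0 := by rintro rfl; simp at hj
    refine ⟨m + 1, t, ?_, fib_add_one_le_two_mul hm⟩
    rw [show fib (m + 2) - fib m + s = fib (m + 1) + s by omega]
    exact ht.cons (by omega) fun b hb => by have := hti b hb; omega
  · obtain ⟨c, u, hu, hc⟩ := ih (m + 1) (by omega) ht (fun b hb => by have := hti b hb; omega)
      (show 1 ≤ j - fib m by omega) (by omega)
    rw [show fib (m + 1) - (j - fib m) + s = fib (m + 2) - j + s by omega] at hu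
    exact ⟨c, u, hu, by omega⟩

theorem IsZeck.fib_le_two_mul_of_sub {n a c k : ℕ} {t u : List ℕ} (hn : IsZeck n (a :: t))
    (hk : 1 ≤ k) (hka : k < fib a) (hnk : IsZeck (n - k) (c :: u)) : fib c ≤ 2 * k := by
  obtain ⟨-, hat, han, ht⟩ := isZeck_cons_iff.1 hn
  obtain ⟨c', u', hu', hc'⟩ :=
    exists_isZeck_fib_sub_add ht (fun b hb => by have := hat b hb; omega) hk hka
  rw [show fib a - k + (n - fib a) = n - k by omega] at hu'
  obtain ⟨rfl, -⟩ := List.cons_eq_cons.1 (hnk.unique_s6 hu')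
  exact hc'

theorem IsZeck.grundy_eq_zero_iff {n a : ℕ} {t : List ℕ} (hn : IsZeck n (a :: t)) (r : ℕ) :
    grundy n r = 0 ↔ r < fib a := by
  induction n using Nat.strong_induction_on generalizing r a t with
  | _ n ih =>
  obtain ⟨ha, hat, han, ht⟩ := isZeck_cons_iff.1 hn
  rw [grundy_eq_zero_iff_zero_notMem, ← not_le]
  refine Iff.not ⟨?_, fun hr => ?_⟩
  · rintro ⟨k, ⟨hk1, hk⟩, hk0⟩
    by_contra! hr
    have hka : k < fib a := by omega
    obtain ⟨c, u, hu⟩ := exists_isZeck_cons (show 0 < n - k by omega)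
    have hc := hn.fib_le_two_mul_of_sub hk1 hka hu
    have hcn := (isZeck_cons_iff.1 hu).2.2.1
    have := (ih (n - k) (by omega) hu _).1 hk0
    omega
  · refine ⟨fib a, ⟨fib_pos.2 (by omega), le_min hr han⟩, ?_⟩
    obtain _ | ⟨b, t'⟩ := t
    · simp only [isZeck_nil_iff.1 ht, grundy_zero_left]
    · have := two_mul_fib_lt_fib ha (hat b (by simp))
      have := fib_pos.2 (show 0 < a by omega)
      exact (ih _ (by omega) ht _).2 (by omega)

theorem zero_mem_grundyOptions_iff {n a r : ℕ} {t : List ℕ} (hn : IsZeck n (a :: t)) :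
    0 ∈ grundyOptions n r ↔ fib a ≤ r := by
  rw [← not_lt, ← hn.grundy_eq_zero_iff, grundy_eq_zero_iff_zero_notMem, not_not]

theorem one_mem_grundyOptions {n r k c : ℕ} {u : List ℕ}
    (hone : ∀ m < n, ∀ {v : List ℕ}, IsZeck m (2 :: v) → ∀ s, 1 ≤ s →
      (v = [] ∨ s < fib v.headI) → grundy m s = 1)
    (hk : 1 ≤ k) (hkr : k ≤ r) (hkn : k < n) (hc : 2 ≤ c) (hkc : k ≤ fib c)
    (hu : IsZeck (n - k - 1) u) (hcu : ∀ b ∈ u, c + 2 ≤ b) : 1 ∈ grundyOptions n r := by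
  have hnk : IsZeck (n - k) (2 :: u) := by
    simpa [show 1 + (n - k - 1) = n - k by omega] using
      hu.cons le_rfl fun b hb => by have := hcu b hb; omega
  refine ⟨k, ⟨hk, le_min hkr hkn.le⟩, hone (n - k) (by omega) hnk _ (by omega) ?_⟩
  obtain _ | ⟨b, v⟩ := u
  · exact Or.inl rfl
  · have := two_mul_fib_lt_fib hc (hcu b (by simp))
    exact Or.inr (by simp only [List.headI_cons]; omega)

theorem one_notMem_grundyOptions {n r b : ℕ} {t : List ℕ}
    (hone : ∀ m < n, ∀ {c : ℕ} {u : List ℕ}, IsZeck m (c :: u) → ∀ s, grundy m s = 1 →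
      fib c = 1 ∧ (u = [] ∨ s < fib u.headI))
    (hn : IsZeck n (2 :: b :: t)) (hr : r < fib b) : 1 ∉ grundyOptions n r := by
  rintro ⟨k, ⟨hk1, hk⟩, hval : grundy (n - k) (min (2 * k) (n - k)) = 1⟩
  have hbt := (isZeck_cons_iff.1 hn).2.2.2
  rw [fib_two] at hbt
  have hbn := (isZeck_cons_iff.1 hbt).2.2.1
  obtain ⟨c, u, hu⟩ := exists_isZeck_cons (show 0 < n - k by omega)
  obtain ⟨hc, hu1⟩ := hone (n - k) (by omega) hu _ hval
  obtain rfl := eq_two_of_fib_eq_one (isZeck_cons_iff.1 hu).1 hc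
  have hu' := (isZeck_cons_iff.1 hu).2.2.2
  rw [fib_two] at hu'
  obtain _ | ⟨d, u'⟩ := u
  · rw [isZeck_nil_iff] at hu'
    omega
  · -- `n - k - 1 = (n - 1) - k`, and `n - 1` has smallest part `F_b > k`
    have hd := hbt.fib_le_two_mul_of_sub hk1 (by omega)
      (by rwa [show n - 1 - k = n - k - 1 by omega])
    have hdn := (isZeck_cons_iff.1 hu').2.2.1
    simp only [List.cons_ne_nil, List.headI_cons, false_or] at hu1
    omega

theorem IsZeck.grundy_eq_one_iff {n a : ℕ} {t : List ℕ} (hn : IsZeck n (a :: t)) (r : ℕ) :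
    grundy n r = 1 ↔ fib a = 1 ∧ 1 ≤ r ∧ (t = [] ∨ r < fib t.headI) := by
  induction n using Nat.strong_induction_on generalizing r a t with
  | _ n ih =>
  have hone : ∀ m < n, ∀ {v : List ℕ}, IsZeck m (2 :: v) → ∀ s, 1 ≤ s →
      (v = [] ∨ s < fib v.headI) → grundy m s = 1 :=
    fun m hm _ hv s hs hsv => (ih m hm hv s).2 ⟨fib_two, hs, hsv⟩
  obtain ⟨ha, hat, han, ht⟩ := isZeck_cons_iff.1 hn
  rw [grundy_eq_one_iff_zero_mem, zero_mem_grundyOptions_iff hn]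
  constructor
  · rintro ⟨hr, hno1⟩
    have ha2 : a = 2 := by
      by_contra
      have : fib 3 ≤ fib a := fib_mono (by omega)
      have h3 : fib 3 = 2 := rfl
      exact hno1 (one_mem_grundyOptions hone (k := fib a - 1) (by omega) (by omega) (by omega) ha
        (by omega) (by rwa [show n - (fib a - 1) - 1 = n - fib a by omega]) hat)
    subst ha2
    refine ⟨fib_two, by simpa using hr, ?_⟩
    obtain _ | ⟨b, t'⟩ := t
    · exact Or.inl rfl
    · simp only [List.cons_ne_nil, List.headI_cons, false_or]
      refine lt_of_not_ge fun hbr => hno1 ?_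
      obtain ⟨hb, hbt', hbn, ht'⟩ := isZeck_cons_iff.1 ht
      simp only [fib_two] at hbn ht'
      have hfb : 0 < fib b := fib_pos.2 (by omega)
      exact one_mem_grundyOptions hone hfb hbr (by omega) hb le_rfl
        (by rwa [show n - fib b - 1 = n - 1 - fib b by omega]) hbt'
  · rintro ⟨hfa, hr, ht1⟩
    obtain rfl := eq_two_of_fib_eq_one ha hfa
    refine ⟨by simpa using hr, ?_⟩
    obtain _ | ⟨b, t'⟩ := t
    · rintro ⟨k, ⟨hk1, hk⟩, hval : grundy (n - k) (min (2 * k) (n - k)) = 1⟩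
      rw [fib_two, isZeck_nil_iff] at ht
      rw [show n - k = 0 by omega, grundy_zero_left] at hval
      exact zero_ne_one hval
    · simp only [List.cons_ne_nil, List.headI_cons, false_or] at ht1
      exact one_notMem_grundyOptions
        (fun m hm _ _ hu s h => ((ih m hm hu s).1 h).imp_right And.right) hn ht1

/-- For every positive integer `n` and every natural number `r`, `𝒢(n, r) = 1` if and only if
`z₁(n) = 1`, `r ≥ 1`, and either the Zeckendorf representation of `n` has only one part or
`r < z₂(n)`. -/
theorem grundy_eq_one_iff (n r : ℕ) (hn : 0 < n) (l : List ℕ) (hl : IsZeck n l) :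
    grundy n r = 1 ↔
      Nat.fib l.headI = 1 ∧ 1 ≤ r ∧ (l.length = 1 ∨ r < Nat.fib (l.getD 1 0)) := by
  obtain _ | ⟨a, t⟩ := l
  · exact absurd (isZeck_nil_iff.1 hl) hn.ne'
  · rw [hl.grundy_eq_one_iff r]
    cases t <;> simp
end

section
/- Let m < n be positive integers, neither of which is a Fibonacci number. Then 𝒢(m, m − 1) ≤ 𝒢(n, n − 1); moreover, if no integer strictly between m and n is a non-Fibonacci number, then 𝒢(n, n − 1) ≤ 𝒢(m, m − 1) + 1. That is, ignoring the Fibonacci numbers, the Grundy values of the starting positions are non-decreasing, and when they increase, they increase by one. -/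
namespace FibNim

/-- the "safe set" whose sInf is the grundy value -/
def S (n r : ℕ) : Set ℕ :=
  {m : ℕ | ∀ k, 1 ≤ k → k ≤ min r n → grundy (n - k) (min (2 * k) (n - k)) ≠ m}

lemma grundy_eq (n r : ℕ) : grundy n r = sInf (S n r) := by rw [grundy]; rfl

lemma S_nonempty (n r : ℕ) : (S n r).Nonempty := by
  classical
  set T : Finset ℕ := (Finset.Icc 1 (min r n)).image
      (fun k => grundy (n - k) (min (2 * k) (n - k))) with hT
  refine ⟨T.sup id + 1, ?_⟩
  intro k hk1 hk2 heq
  have hmem : grundy (n - k) (min (2 * k) (n - k)) ∈ T := by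
    apply Finset.mem_image_of_mem
    simp [Finset.mem_Icc, hk1, hk2]
  have := Finset.le_sup (f := id) hmem
  simp only [id] at this
  rw [heq] at this
  omega

lemma grundy_mem (n r : ℕ) : grundy n r ∈ S n r := by
  rw [grundy_eq]; exact Nat.sInf_mem (S_nonempty n r)

/-- option values are never the grundy value -/
lemma grundy_ne_option {n r : ℕ} {k : ℕ} (hk1 : 1 ≤ k) (hk2 : k ≤ min r n) :
    grundy (n - k) (min (2 * k) (n - k)) ≠ grundy n r :=
  grundy_mem n r k hk1 hk2

lemma grundy_le {n r m : ℕ}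
    (h : ∀ k, 1 ≤ k → k ≤ min r n → grundy (n - k) (min (2 * k) (n - k)) ≠ m) :
    grundy n r ≤ m := by
  rw [grundy_eq]; exact Nat.sInf_le h

lemma exists_option_of_lt {n r v : ℕ} (h : v < grundy n r) :
    ∃ k, 1 ≤ k ∧ k ≤ min r n ∧ grundy (n - k) (min (2 * k) (n - k)) = v := by
  rw [grundy_eq] at h
  have := Nat.notMem_of_lt_sInf h
  simp only [S, Set.mem_setOf_eq, not_forall] at this
  obtain ⟨k, hk1, hk2, hne⟩ := this
  exact ⟨k, hk1, hk2, by simpa using hne⟩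

lemma grundy_zero_left (r : ℕ) : grundy 0 r = 0 := by
  have : (0:ℕ) ∈ S 0 r := by
    intro k hk1 hk2 _
    simp at hk2; omega
  have := Nat.sInf_le this
  rw [grundy_eq]; omega

lemma grundy_zero_right (n : ℕ) : grundy n 0 = 0 := by
  have : (0:ℕ) ∈ S n 0 := by intro k hk1 hk2; simp at hk2; omega
  have := Nat.sInf_le this
  rw [grundy_eq]; omega

/-- monotone in the budget -/
lemma grundy_mono {n : ℕ} {r r' : ℕ} (h : r ≤ r') : grundy n r ≤ grundy n r' := by
  apply grundy_le
  intro k hk1 hk2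
  have : k ≤ min r' n := by simp at hk2 ⊢; omega
  exact grundy_ne_option hk1 this

/-- pigeonhole: grundy value at budget r is at most r -/
lemma grundy_le_budget (n r : ℕ) : grundy n r ≤ r := by
  classical
  set T : Finset ℕ := (Finset.Icc 1 (min r n)).image
      (fun k => grundy (n - k) (min (2 * k) (n - k))) with hT
  have hTcard : T.card ≤ r := by
    calc T.card ≤ (Finset.Icc 1 (min r n)).card := Finset.card_image_le
    _ = min r n := by rw [Nat.card_Icc]; omega
    _ ≤ r := min_le_left _ _
  have : ¬ (Finset.range (r+1) ⊆ T) := by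
    intro hsub
    have := Finset.card_le_card hsub
    simp [Finset.card_range] at this; omega
  obtain ⟨m, hm1, hm2⟩ := Finset.not_subset.mp this
  have hmS : m ∈ S n r := by
    intro k hk1 hk2 heq
    exact hm2 (heq ▸ Finset.mem_image_of_mem _ (by simp [Finset.mem_Icc, hk1, hk2]))
  have := Nat.sInf_le hmS
  rw [grundy_eq]
  simp [Finset.mem_range] at hm1
  omega

end FibNim

namespace FibNim

/-- grundy value with full budget -/
noncomputable def h (n : ℕ) : ℕ := grundy n n

/-- least budget achieving the full-budget grundy value -/
noncomputable def TopR (n : ℕ) : ℕ := sInf {r : ℕ | grundy n r = h n}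

lemma TopR_le (n : ℕ) : TopR n ≤ n := Nat.sInf_le (by simp [h])

lemma grundy_TopR (n : ℕ) : grundy n (TopR n) = h n :=
  Nat.sInf_mem (⟨n, by simp [h]⟩ : {r : ℕ | grundy n r = h n}.Nonempty)

lemma grundy_of_TopR_le {n r : ℕ} (h1 : TopR n ≤ r) (h2 : r ≤ n) : grundy n r = h n := by
  have hlo := grundy_mono (n := n) h1
  rw [grundy_TopR] at hlo
  have hhi := grundy_mono (n := n) h2
  exact le_antisymm hhi hlo

lemma TopR_le_of {n r : ℕ} (hr : grundy n r = h n) : TopR n ≤ r := Nat.sInf_le hr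

lemma h_zero : h 0 = 0 := grundy_zero_left 0

lemma TopR_zero : TopR 0 = 0 := by
  have h0 : (0:ℕ) ∈ {r : ℕ | grundy 0 r = h 0} := by simp [h_zero, grundy_zero_left]
  have := Nat.sInf_le h0
  simpa [TopR] using this

lemma TopR_pos {n : ℕ} (hn : 0 < h n) : 1 ≤ TopR n := by
  by_contra hc
  have h0 : TopR n = 0 := by omega
  have := grundy_TopR n
  rw [h0, grundy_zero_right] at this
  omega

/-- The master induction: h is nondecreasing with steps ≤ 1, via persistent witnesses. -/
lemma master (n : ℕ) :
    (∀ a b, a ≤ b → b ≤ n → h a ≤ h b) ∧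
    (∀ m, m + 1 ≤ n → h (m+1) ≤ h m + 1) ∧
    (∀ v, v < h n → ∃ j, h j = v ∧ 2*j + TopR j ≤ 2*n + 2) := by
  induction n with
  | zero =>
    refine ⟨?_, ?_, ?_⟩
    · intro a b hab hb
      have hb0 : b = 0 := by omega
      have ha0 : a = 0 := by omega
      subst hb0; subst ha0; exact le_refl _
    · intro m hm; omega
    · intro v hv; rw [h_zero] at hv; omega
  | succ n ih =>
    obtain ⟨Hmono, Hstep, Hwit⟩ := ih
    -- every v < h n is an option value of (n+1, n+1)
    have Hopt : ∀ v, v < h n → ∃ k, 1 ≤ k ∧ k ≤ min (n+1) (n+1) ∧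
        grundy (n+1-k) (min (2*k) (n+1-k)) = v := by
      intro v hv
      rcases Nat.eq_zero_or_pos v with hv0 | hvpos
      · refine ⟨n+1, by omega, by omega, ?_⟩
        simp [hv0, grundy_zero_left]
      · obtain ⟨j, hj, hjb⟩ := Hwit v hv
        have hTpos : 1 ≤ TopR j := TopR_pos (by omega)
        have hjn : j ≤ n := by omega
        refine ⟨n+1-j, by omega, by omega, ?_⟩
        have hj' : n+1-(n+1-j) = j := by omega
        rw [hj']
        have hb1 : TopR j ≤ min (2*(n+1-j)) j := by
          have := TopR_le j
          have : TopR j ≤ 2*(n+1-j) := by omega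
          omega
        rw [grundy_of_TopR_le hb1 (min_le_right _ _), hj]
    -- upper bound : h (n+1) ≤ h n + 1
    have Hub : h (n+1) ≤ h n + 1 := by
      apply grundy_le
      intro k hk1 hk2 heq
      have hkn : k ≤ n + 1 := by simp at hk2; omega
      have h1 : grundy (n+1-k) (min (2*k) (n+1-k)) ≤ h (n+1-k) :=
        grundy_mono (min_le_right _ _)
      have h2 : h (n+1-k) ≤ h n := Hmono _ _ (by omega) (le_refl n)
      omega
    -- lower bound : h n ≤ h (n+1)
    have Hlb : h n ≤ h (n+1) := by
      by_contra hc
      push_neg at hc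
      obtain ⟨k, hk1, hk2, hkv⟩ := Hopt (h (n+1)) hc
      exact grundy_ne_option hk1 hk2 hkv
    refine ⟨?_, ?_, ?_⟩
    · intro a b hab hb
      rcases Nat.lt_or_ge b (n+1) with hbn | hbn
      · exact Hmono a b hab (by omega)
      · have hb' : b = n+1 := by omega
        subst hb'
        rcases Nat.lt_or_ge a (n+1) with han | han
        · exact le_trans (Hmono a n (by omega) (le_refl n)) Hlb
        · have : a = n+1 := by omega
          subst this; exact le_refl _
    · intro m hm
      rcases Nat.lt_or_ge (m+1) (n+1) with h' | h'
      · exact Hstep m (by omega)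
      · have : m = n := by omega
        subst this; exact Hub
    · intro v hv
      rcases Nat.lt_or_ge v (h n) with hvn | hvn
      · obtain ⟨j, hj1, hj2⟩ := Hwit v hvn
        exact ⟨j, hj1, by omega⟩
      · -- v = h n and there was a jump
        have hveq : v = h n := by omega
        subst hveq
        -- h n is an option value of (n+1, n+1)
        have : ¬ ((h n) ∈ S (n+1) (n+1)) := by
          intro hmem
          have := Nat.sInf_le hmem
          rw [← grundy_eq] at this
          change grundy (n+1) (n+1) ≤ h n at this
          have : h (n+1) ≤ h n := this
          omega
        simp only [S, Set.mem_setOf_eq, not_forall] at this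
        obtain ⟨k, hk1, hk2, hne⟩ := this
        have hkv : grundy (n+1-k) (min (2*k) (n+1-k)) = h n := by simpa using hne
        set j := n + 1 - k with hjdef
        have hkn : k ≤ n+1 := by simp at hk2; omega
        rcases Nat.eq_zero_or_pos j with hj0 | hjpos
        · -- then h n = 0
          rw [hj0, grundy_zero_left] at hkv
          refine ⟨0, by rw [h_zero, hkv], by rw [TopR_zero]; omega⟩
        · have hjn : j ≤ n := by omega
          have hle1 : grundy j (min (2*k) j) ≤ h j := grundy_mono (min_le_right _ _)
          have hle2 : h j ≤ h n := Hmono _ _ hjn (le_refl n)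
          have hjh : h j = h n := by omega
          have hTop : TopR j ≤ min (2*k) j := TopR_le_of (by rw [hkv, hjh])
          refine ⟨j, hjh, ?_⟩
          have : min (2*k) j ≤ 2*k := min_le_left _ _
          omega
end FibNim

namespace FibNim

def isFib (n : ℕ) : Prop := ∃ t, Nat.fib t = n

lemma lt_fib_add_two (n : ℕ) : n < Nat.fib (n + 2) := by
  induction n with
  | zero => simp
  | succ n ih =>
    show n + 1 < Nat.fib (n + 3)
    have he : Nat.fib (n+3) = Nat.fib (n+1) + Nat.fib (n+2) := Nat.fib_add_two
    have hp : 0 < Nat.fib (n+1) := Nat.fib_pos.mpr (by omega)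
    omega

lemma fib_three : Nat.fib 3 = 2 := by decide
lemma fib_four : Nat.fib 4 = 3 := by decide

/-- index of the largest Fibonacci number `≤ n` -/
def floorIdx (n : ℕ) : ℕ := Nat.findGreatest (fun t => Nat.fib t ≤ n) (n + 2)

lemma two_le_floorIdx {n : ℕ} (hn : 1 ≤ n) : 2 ≤ floorIdx n := by
  unfold floorIdx
  exact Nat.le_findGreatest (P := fun t => Nat.fib t ≤ n) (n := n + 2)
    (by omega) (by simpa [Nat.fib_two] using hn)

lemma fib_floorIdx_le {n : ℕ} (hn : 1 ≤ n) : Nat.fib (floorIdx n) ≤ n := by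
  unfold floorIdx
  exact Nat.findGreatest_spec (P := fun t => Nat.fib t ≤ n) (m := 2) (n := n + 2)
    (by omega) (by simpa [Nat.fib_two] using hn)

lemma floorIdx_le {n : ℕ} (hn : 1 ≤ n) : floorIdx n ≤ n + 1 := by
  by_contra hc
  have h1 : floorIdx n ≤ n + 2 := Nat.findGreatest_le (n := n + 2)
  have h2 : floorIdx n = n + 2 := by omega
  have h3 := fib_floorIdx_le hn
  rw [h2] at h3
  have := lt_fib_add_two n
  omega

lemma lt_fib_floorIdx_succ {n : ℕ} (hn : 1 ≤ n) : n < Nat.fib (floorIdx n + 1) := by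
  have h1 : floorIdx n ≤ n + 1 := floorIdx_le hn
  have h2 := Nat.findGreatest_is_greatest (P := fun t => Nat.fib t ≤ n) (n := n + 2)
    (k := floorIdx n + 1) (by unfold floorIdx at *; omega) (by omega)
  omega

lemma floorIdx_unique {n s : ℕ} (hn : 1 ≤ n) (hs : 2 ≤ s) (h1 : Nat.fib s ≤ n)
    (h2 : n < Nat.fib (s + 1)) : floorIdx n = s := by
  have hsb : s ≤ n + 2 := by
    have := lt_fib_add_two (s - 2)
    have he : s - 2 + 2 = s := by omega
    rw [he] at this
    omega
  have hle : s ≤ floorIdx n := by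
    unfold floorIdx
    exact Nat.le_findGreatest (P := fun t => Nat.fib t ≤ n) (n := n + 2) hsb h1
  by_contra hc
  have hgt : s + 1 ≤ floorIdx n := by omega
  have := Nat.fib_mono hgt
  have := fib_floorIdx_le hn
  omega

end FibNim

namespace FibNim

/-- smallest part of the Zeckendorf representation (greedy recursion) -/
def szA (n : ℕ) : ℕ :=
  if h : n - Nat.fib (floorIdx n) = 0 then n else szA (n - Nat.fib (floorIdx n))
termination_by n
decreasing_by
  have hn : 1 ≤ n := by omega
  have h2 : 2 ≤ floorIdx n := two_le_floorIdx hn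
  have h3 : 0 < Nat.fib (floorIdx n) := Nat.fib_pos.mpr (by omega)
  omega

lemma szA_eq (n : ℕ) :
    szA n = if n - Nat.fib (floorIdx n) = 0 then n else szA (n - Nat.fib (floorIdx n)) := by
  rw [szA]
  split <;> rfl

/-- no Fibonacci number strictly between `fib s` and `fib (s+1)` (for s ≥ 2) -/
lemma not_isFib_between {s y : ℕ} (hs : 2 ≤ s) (hy : 1 ≤ y)
    (hlt : Nat.fib s + y < Nat.fib (s + 1)) : ¬ isFib (Nat.fib s + y) := by
  rintro ⟨u, hu⟩
  rcases Nat.lt_or_ge u 2 with hu2 | hu2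
  · -- fib u ≤ 1 but fib s + y ≥ 2
    have : Nat.fib u ≤ 1 := by interval_cases u <;> simp
    have : 1 ≤ Nat.fib s := Nat.fib_pos.mpr (by omega)
    omega
  · have h1 : Nat.fib s < Nat.fib u := by omega
    have h2 : s < u := by
      by_contra hc
      have := Nat.fib_mono (le_of_not_gt hc)
      omega
    have := Nat.fib_mono (show s + 1 ≤ u by omega)
    omega

lemma fib_branch_iff {n : ℕ} (hn : 1 ≤ n) :
    n - Nat.fib (floorIdx n) = 0 ↔ isFib n := by
  constructor
  · intro h
    have := fib_floorIdx_le hn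
    exact ⟨floorIdx n, by omega⟩
  · rintro ⟨t, ht⟩
    have hfl := fib_floorIdx_le hn
    have hfu := lt_fib_floorIdx_succ hn
    by_contra hc
    -- n is strictly between fib (floorIdx n) and fib (floorIdx n + 1)
    have h2 : 2 ≤ floorIdx n := two_le_floorIdx hn
    have : ¬ isFib (Nat.fib (floorIdx n) + (n - Nat.fib (floorIdx n))) :=
      not_isFib_between h2 (by omega) (by omega)
    exact this (by rw [show Nat.fib (floorIdx n) + (n - Nat.fib (floorIdx n)) = n by omega]; exact ⟨t, ht⟩)

lemma szA_of_fib {n : ℕ} (hn : 1 ≤ n) (hf : isFib n) : szA n = n := by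
  rw [szA_eq, if_pos ((fib_branch_iff hn).mpr hf)]

lemma szA_of_not_fib {n : ℕ} (hn : 1 ≤ n) (hf : ¬ isFib n) :
    szA n = szA (n - Nat.fib (floorIdx n)) := by
  rw [szA_eq, if_neg (fun h => hf ((fib_branch_iff hn).mp h))]

lemma szA_spec : ∀ n, 1 ≤ n → 1 ≤ szA n ∧ szA n ≤ n ∧ isFib (szA n) := by
  intro n
  induction n using Nat.strong_induction_on with
  | _ n ih =>
    intro hn
    by_cases hf : isFib n
    · rw [szA_of_fib hn hf]; exact ⟨hn, le_refl n, hf⟩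
    · rw [szA_of_not_fib hn hf]
      set x := n - Nat.fib (floorIdx n) with hx
      have hx1 : 1 ≤ x := by
        have := (fib_branch_iff hn).not.mpr hf
        omega
      have hxlt : x < n := by
        have h2 : 2 ≤ floorIdx n := two_le_floorIdx hn
        have h3 : 0 < Nat.fib (floorIdx n) := Nat.fib_pos.mpr (by omega)
        have := fib_floorIdx_le hn
        omega
      obtain ⟨a, b, c⟩ := ih x hxlt hx1
      exact ⟨a, by omega, c⟩

/-- decomposition of a positive non-Fibonacci number -/
lemma decomp {n : ℕ} (hn : 1 ≤ n) (hf : ¬ isFib n) :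
    ∃ t x, 2 ≤ t ∧ 1 ≤ x ∧ x < Nat.fib (t - 1) ∧ n = Nat.fib t + x ∧
      t = floorIdx n ∧ szA n = szA x := by
  classical
  refine ⟨floorIdx n, n - Nat.fib (floorIdx n), two_le_floorIdx hn, ?_, ?_, ?_, rfl,
    szA_of_not_fib hn hf⟩
  · have := (fib_branch_iff hn).not.mpr hf
    omega
  · have h2 : 2 ≤ floorIdx n := two_le_floorIdx hn
    have hfu := lt_fib_floorIdx_succ hn
    have hadd : Nat.fib (floorIdx n + 1) = Nat.fib (floorIdx n - 1) + Nat.fib (floorIdx n) := by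
      have : floorIdx n - 1 + 2 = floorIdx n + 1 := by omega
      have h := Nat.fib_add_two (n := floorIdx n - 1)
      rw [this] at h
      rw [h, show floorIdx n - 1 + 1 = floorIdx n by omega]
    have := fib_floorIdx_le hn
    omega
  · have := fib_floorIdx_le hn
    omega

/-- sandwich: adding `fib t` on top does not change the smallest Zeckendorf part -/
lemma szA_fib_add {t y : ℕ} (ht : 2 ≤ t) (hy : 1 ≤ y) (hyt : y < Nat.fib (t - 1)) :
    szA (Nat.fib t + y) = szA y := by
  have hadd : Nat.fib (t + 1) = Nat.fib (t - 1) + Nat.fib t := by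
    have h := Nat.fib_add_two (n := t - 1)
    rw [show t - 1 + 2 = t + 1 by omega] at h
    rw [h, show t - 1 + 1 = t by omega]
  have hpos : 1 ≤ Nat.fib t := Nat.fib_pos.mpr (by omega)
  have hn : 1 ≤ Nat.fib t + y := by omega
  have hflr : floorIdx (Nat.fib t + y) = t :=
    floorIdx_unique hn ht (by omega) (by omega)
  have hnf : ¬ isFib (Nat.fib t + y) := not_isFib_between ht hy (by omega)
  rw [szA_of_not_fib hn hnf, hflr]
  congr 1
  omega

end FibNim

namespace FibNim

lemma szA_one : szA 1 = 1 := szA_of_fib (le_refl 1) ⟨1, rfl⟩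

lemma three_le_of_two_le_fib {s : ℕ} (hs : 2 ≤ Nat.fib s) : 3 ≤ s := by
  by_contra hc
  interval_cases s <;> simp_all

/-- key lemma, Fibonacci case: removing `k < fib t` from `fib t` leaves a number whose
smallest Zeckendorf part is at most `2k`. -/
lemma A2F : ∀ t, 2 ≤ t → ∀ k, 1 ≤ k → k < Nat.fib t → szA (Nat.fib t - k) ≤ 2 * k := by
  intro t
  induction t using Nat.strong_induction_on with
  | _ t ih =>
    intro ht k hk1 hk2
    have h3 : 3 ≤ t := three_le_of_two_le_fib (by omega)
    rcases Nat.lt_or_ge 3 t with h4 | h4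
    swap
    · -- t = 3 : fib 3 = 2, k = 1
      have ht3 : t = 3 := by omega
      subst ht3
      rw [fib_three] at hk2 ⊢
      have hk : k = 1 := by omega
      rw [hk, show (2:ℕ) - 1 = 1 by rfl, szA_one]
      omega
    · -- 4 ≤ t
      have hsplit : Nat.fib t = Nat.fib (t-2) + Nat.fib (t-1) := by
        have h := Nat.fib_add_two (n := t - 2)
        rw [show t - 2 + 2 = t by omega, show t - 2 + 1 = t - 1 by omega] at h
        exact h
      have hp2 : 1 ≤ Nat.fib (t-2) := Nat.fib_pos.mpr (by omega)
      have hp1 : 1 ≤ Nat.fib (t-1) := Nat.fib_pos.mpr (by omega)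
      rcases lt_trichotomy k (Nat.fib (t-2)) with hlt | heq | hgt
      · -- k < fib (t-2) : fib t - k = fib (t-1) + (fib (t-2) - k)
        have hy1 : 1 ≤ Nat.fib (t-2) - k := by omega
        have heq2 : Nat.fib t - k = Nat.fib (t-1) + (Nat.fib (t-2) - k) := by omega
        rw [heq2, szA_fib_add (by omega) hy1 (by rw [show t-1-1 = t-2 by omega]; omega)]
        exact ih (t-2) (by omega) (by omega) k hk1 hlt
      · -- k = fib (t-2) : fib t - k = fib (t-1)
        have heq2 : Nat.fib t - k = Nat.fib (t-1) := by omega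
        rw [heq2, szA_of_fib hp1 ⟨t-1, rfl⟩]
        have hsplit2 : Nat.fib (t-1) = Nat.fib (t-3) + Nat.fib (t-2) := by
          have h := Nat.fib_add_two (n := t - 3)
          rw [show t - 3 + 2 = t - 1 by omega, show t - 3 + 1 = t - 2 by omega] at h
          exact h
        have hmono : Nat.fib (t-3) ≤ Nat.fib (t-2) := Nat.fib_mono (by omega)
        omega
      · -- k > fib (t-2)
        have hk' : 1 ≤ k - Nat.fib (t-2) := by omega
        have hk'2 : k - Nat.fib (t-2) < Nat.fib (t-1) := by omega
        have heq2 : Nat.fib t - k = Nat.fib (t-1) - (k - Nat.fib (t-2)) := by omega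
        rw [heq2]
        have := ih (t-1) (by omega) (by omega) (k - Nat.fib (t-2)) hk' hk'2
        omega

/-- key lemma A2: if `k` is smaller than the smallest Zeckendorf part of `n`, then the
smallest part of `n - k` is at most `2k`. -/
lemma A2 : ∀ n, 1 ≤ n → ∀ k, 1 ≤ k → k < szA n → szA (n - k) ≤ 2 * k := by
  intro n
  induction n using Nat.strong_induction_on with
  | _ n ih =>
    intro hn k hk1 hk2
    by_cases hf : isFib n
    · rw [szA_of_fib hn hf] at hk2
      obtain ⟨t, ht⟩ := hf
      have ht2 : 2 ≤ t ∨ Nat.fib t ≤ 1 := by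
        rcases Nat.lt_or_ge t 2 with h | h
        · right; interval_cases t <;> simp
        · left; exact h
      rcases ht2 with ht2 | hsmall
      · rw [← ht] at hk2 ⊢
        exact A2F t ht2 k hk1 hk2
      · omega
    · obtain ⟨t, x, ht, hx1, hxlt, hnx, hflr, hsz⟩ := decomp hn hf
      rw [hsz] at hk2
      have hszx : szA x ≤ x := (szA_spec x hx1).2.1
      have hnk : n - k = Nat.fib t + (x - k) := by omega
      rw [hnk, szA_fib_add ht (by omega) (by omega)]
      exact ih x (by
        have : 1 ≤ Nat.fib t := Nat.fib_pos.mpr (by omega)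
        omega) hx1 k hk1 hk2

/-- key lemma A3: for non-Fibonacci `n`, removing the smallest Zeckendorf part leaves a
number whose smallest part exceeds twice the removed part. -/
lemma A3 : ∀ n, 1 ≤ n → ¬ isFib n → 1 ≤ n - szA n ∧ 2 * szA n < szA (n - szA n) := by
  intro n
  induction n using Nat.strong_induction_on with
  | _ n ih =>
    intro hn hf
    obtain ⟨t, x, ht, hx1, hxlt, hnx, hflr, hsz⟩ := decomp hn hf
    have hszx : szA x ≤ x := (szA_spec x hx1).2.1
    have hszx1 : 1 ≤ szA x := (szA_spec x hx1).1
    have hfibt : 1 ≤ Nat.fib t := Nat.fib_pos.mpr (by omega)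
    have hxn : x < n := by omega
    by_cases hfx : isFib x
    · -- x is a Fibonacci number: szA n = x, n - szA n = fib t
      have hxx : szA x = x := szA_of_fib hx1 hfx
      have ht4 : 4 ≤ t := by
        have h2 : 2 ≤ Nat.fib (t-1) := by omega
        have := three_le_of_two_le_fib h2
        omega
      -- x ≤ fib (t-2)
      have hxle : x ≤ Nat.fib (t-2) := by
        obtain ⟨u, hu⟩ := hfx
        rcases Nat.lt_or_ge u 2 with hu2 | hu2
        · -- x = fib u ≤ 1 ≤ fib (t-2)
          have : Nat.fib u ≤ 1 := by interval_cases u <;> simp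
          have : 1 ≤ Nat.fib (t-2) := Nat.fib_pos.mpr (by omega)
          omega
        · have hu3 : u < t - 1 := by
            by_contra hc
            have := Nat.fib_mono (le_of_not_gt (by omega : ¬ u < t - 1))
            omega
          have := Nat.fib_mono (show u ≤ t - 2 by omega)
          omega
      have hsplit : Nat.fib t = Nat.fib (t-2) + Nat.fib (t-1) := by
        have h := Nat.fib_add_two (n := t - 2)
        rw [show t - 2 + 2 = t by omega, show t - 2 + 1 = t - 1 by omega] at h
        exact h
      have hstrict : Nat.fib (t-2) < Nat.fib (t-1) := by
        have := Nat.fib_lt_fib_succ (show 2 ≤ t - 2 by omega)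
        rw [show t - 2 + 1 = t - 1 by omega] at this
        exact this
      rw [hsz, hxx]
      have hneq : n - x = Nat.fib t := by omega
      rw [hneq, szA_of_fib (by omega) ⟨t, rfl⟩]
      omega
    · -- x not Fibonacci: recurse
      obtain ⟨ih1, ih2⟩ := ih x hxn hx1 hfx
      rw [hsz]
      have hneq : n - szA x = Nat.fib t + (x - szA x) := by omega
      rw [hneq, szA_fib_add ht ih1 (by omega)]
      constructor
      · omega
      · exact ih2

end FibNim

namespace FibNim

/-- Whinihan's characterization of the zero positions of Fibonacci nim -/
lemma PL : ∀ n, 1 ≤ n → ∀ r, (grundy n r = 0 ↔ r < szA n) := by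
  intro n
  induction n using Nat.strong_induction_on with
  | _ n ih =>
    intro hn r
    constructor
    · -- grundy n r = 0 → r < szA n ; contrapositive
      intro h0
      by_contra hc
      have hr : szA n ≤ r := by omega
      -- the move k₀ = szA n has value 0
      have hsz1 : 1 ≤ szA n := (szA_spec n hn).1
      have hszn : szA n ≤ n := (szA_spec n hn).2.1
      have hval : grundy (n - szA n) (min (2 * szA n) (n - szA n)) = 0 := by
        by_cases hf : isFib n
        · rw [szA_of_fib hn hf]
          simp [grundy_zero_left]
        · obtain ⟨h1, h2⟩ := A3 n hn hf
          have hlt : n - szA n < n := by omega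
          rw [(ih _ hlt h1 _)]
          have : min (2 * szA n) (n - szA n) ≤ 2 * szA n := min_le_left _ _
          omega
      have := grundy_ne_option (n := n) (r := r) (k := szA n) hsz1 (by omega)
      rw [hval, h0] at this
      exact this rfl
    · -- r < szA n → grundy n r = 0
      intro hr
      have hszn : szA n ≤ n := (szA_spec n hn).2.1
      have h0S : (0:ℕ) ∈ S n r := by
        intro k hk1 hk2 heq
        have hkr : k ≤ r := le_trans hk2 (min_le_left _ _)
        have hkn : k < n := by omega
        have hnk1 : 1 ≤ n - k := by omega
        have hA2 : szA (n - k) ≤ 2 * k := A2 n hn k hk1 (by omega)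
        have hA1 : szA (n - k) ≤ n - k := (szA_spec (n-k) hnk1).2.1
        rw [(ih (n-k) (by omega) hnk1 _)] at heq
        omega
      have := Nat.sInf_le h0S
      rw [grundy_eq]
      omega

/-- for non-Fibonacci `n`, the starting position has the same grundy value as the
full-budget position -/
lemma grundy_pred_eq_h {n : ℕ} (hn : 1 ≤ n) (hf : ¬ isFib n) : grundy n (n - 1) = h n := by
  have hle : grundy n (n-1) ≤ h n := grundy_mono (by omega)
  have hsz1 : 1 ≤ szA n := (szA_spec n hn).1
  have hszn : szA n ≤ n := (szA_spec n hn).2.1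
  have hszne : szA n ≠ n := by
    intro he
    exact hf (he ▸ (szA_spec n hn).2.2)
  have hge : h n ≤ grundy n (n-1) := by
    have hmem : grundy n (n-1) ∈ S n n := by
      intro k hk1 hk2
      rcases Nat.lt_or_ge k n with hkn | hkn
      · exact grundy_mem n (n-1) k hk1 (by simp at hk2 ⊢; omega)
      · have hke : k = n := by simp at hk2; omega
        rw [hke, show n - n = 0 by omega, grundy_zero_left]
        intro h0
        have := (PL n hn (n-1)).mp h0.symm
        omega
    rw [h, grundy_eq (n := n) (r := n)]
    exact Nat.sInf_le hmem
  omega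

lemma h_mono {a b : ℕ} (hab : a ≤ b) : h a ≤ h b := (master b).1 a b hab (le_refl b)

lemma h_step (m : ℕ) : h (m+1) ≤ h m + 1 := (master (m+1)).2.1 m (le_refl _)

/-- no two consecutive jumps: `h (n+2) ≤ h n + 1` once `h n ≥ 2` -/
lemma h_two_step {n : ℕ} (hn : 2 ≤ h n) : h (n+2) ≤ h n + 1 := by
  apply grundy_le
  intro k hk1 hk2 heq
  have hkn : k ≤ n + 2 := by simp at hk2; omega
  rcases Nat.lt_or_ge k 2 with hk2' | hk2'
  · -- k = 1 : value ≤ 2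
    have hke : k = 1 := by omega
    subst hke
    have : grundy (n+2-1) (min (2*1) (n+2-1)) ≤ min (2*1) (n+2-1) := grundy_le_budget _ _
    have h2 : min (2*1) (n+2-1) ≤ 2 := by omega
    omega
  · -- k ≥ 2 : target j ≤ n, value ≤ h j ≤ h n
    have h1 : grundy (n+2-k) (min (2*k) (n+2-k)) ≤ h (n+2-k) := grundy_mono (min_le_right _ _)
    have h2 : h (n+2-k) ≤ h n := h_mono (by omega)
    omega

lemma grundy_one_one : grundy 1 1 = 1 := by
  have hne : grundy 1 1 ≠ 0 := by
    have := grundy_ne_option (n := 1) (r := 1) (k := 1) (le_refl 1) (by simp)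
    rw [show (1:ℕ) - 1 = 0 by rfl, grundy_zero_left] at this
    exact fun h => this h.symm
  have hle : grundy 1 1 ≤ 1 := by
    apply grundy_le
    intro k hk1 hk2
    have : k = 1 := by simp at hk2; omega
    subst this
    rw [show (1:ℕ) - 1 = 0 by rfl, grundy_zero_left]
    omega
  omega

lemma h_four : 2 ≤ h 4 := by
  have h0 : grundy 4 4 ≠ 0 := by
    have := grundy_ne_option (n := 4) (r := 4) (k := 4) (by omega) (by simp)
    rw [show (4:ℕ) - 4 = 0 by rfl, grundy_zero_left] at this
    exact fun h => this h.symm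
  have h1 : grundy 4 4 ≠ 1 := by
    have := grundy_ne_option (n := 4) (r := 4) (k := 3) (by omega) (by simp)
    rw [show (4:ℕ) - 3 = 1 by rfl] at this
    rw [show min (2*3) 1 = 1 by rfl, grundy_one_one] at this
    exact fun h => this h.symm
  have : h 4 = grundy 4 4 := rfl
  omega

lemma no_adjacent_fibs {m : ℕ} (hm : 4 ≤ m) (h1 : isFib (m+1)) (h2 : isFib (m+2)) :
    False := by
  obtain ⟨a, ha⟩ := h1
  obtain ⟨b, hb⟩ := h2
  have ha5 : 5 ≤ a := by
    by_contra hc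
    have : Nat.fib a ≤ Nat.fib 4 := Nat.fib_mono (by omega)
    rw [fib_four] at this
    omega
  have hab : a < b := by
    by_contra hc
    have : Nat.fib b ≤ Nat.fib a := Nat.fib_mono (le_of_not_gt (by omega))
    omega
  have hs : Nat.fib (a+1) = Nat.fib (a-1) + Nat.fib a := by
    have h := Nat.fib_add_two (n := a - 1)
    rw [show a - 1 + 2 = a + 1 by omega, show a - 1 + 1 = a by omega] at h
    exact h
  have hf3 : 3 ≤ Nat.fib (a-1) := by
    have : Nat.fib 4 ≤ Nat.fib (a-1) := Nat.fib_mono (by omega)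
    rw [fib_four] at this
    omega
  have : Nat.fib (a+1) ≤ Nat.fib b := Nat.fib_mono (by omega)
  omega

end FibNim

/-- Let `m < n` be positive integers, neither of which is a Fibonacci number.  Then
`𝒢(m, m - 1) ≤ 𝒢(n, n - 1)`; moreover, if every integer strictly between `m` and `n` is a
Fibonacci number, then `𝒢(n, n - 1) ≤ 𝒢(m, m - 1) + 1`.  That is, ignoring the Fibonacci
numbers, the Grundy values of the starting positions are non-decreasing, and when they
increase, they increase by one. -/
theorem grundy_start_monotone (m n : ℕ) (hm : 0 < m) (hmn : m < n)
    (hfm : ¬ ∃ t, Nat.fib t = m) (hfn : ¬ ∃ t, Nat.fib t = n) :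
    grundy m (m - 1) ≤ grundy n (n - 1) ∧
      ((∀ j, m < j → j < n → ∃ t, Nat.fib t = j) →
        grundy n (n - 1) ≤ grundy m (m - 1) + 1) := by
  have hm4 : 4 ≤ m := by
    by_contra hc
    interval_cases m
    · exact hfm ⟨1, rfl⟩
    · exact hfm ⟨3, FibNim.fib_three⟩
    · exact hfm ⟨4, FibNim.fib_four⟩
  have hgm : grundy m (m-1) = FibNim.h m := FibNim.grundy_pred_eq_h (by omega) hfm
  have hgn : grundy n (n-1) = FibNim.h n := FibNim.grundy_pred_eq_h (by omega) hfn
  constructor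
  · rw [hgm, hgn]
    exact FibNim.h_mono (le_of_lt hmn)
  · intro hgap
    rw [hgm, hgn]
    have hhm : 2 ≤ FibNim.h m := le_trans FibNim.h_four (FibNim.h_mono hm4)
    rcases Nat.lt_or_ge n (m+3) with hn3 | hn3
    · rcases Nat.lt_or_ge n (m+2) with hn2 | hn2
      · have : n = m + 1 := by omega
        subst this
        exact FibNim.h_step m
      · have : n = m + 2 := by omega
        subst this
        exact FibNim.h_two_step hhm
    · exact absurd (hgap (m+2) (by omega) (by omega))
        (fun h2 => FibNim.no_adjacent_fibs hm4 (hgap (m+1) (by omega) (by omega)) h2)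
end

section
/- For every positive integer n, 𝒢(⌈3n/2⌉) ≥ 𝒢(n) + 1. -/
/-- The set of Grundy values of options of position `(n, r)`. -/
def optSet (n r : ℕ) : Set ℕ :=
  (fun k => grundy (n - k) (min (2 * k) (n - k))) '' Set.Icc 1 (min r n)

lemma grundy_eq (n r : ℕ) : grundy n r = sInf (optSet n r)ᶜ := by
  rw [grundy]
  congr 1
  ext m
  simp only [optSet, Set.mem_compl_iff, Set.mem_image, Set.mem_Icc, Set.mem_setOf_eq,
    not_exists]
  exact ⟨fun h k hk => h k hk.1.1 hk.1.2 hk.2, fun h k h1 h2 he => h k ⟨⟨h1, h2⟩, he⟩⟩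

lemma optSet_finite (n r : ℕ) : (optSet n r).Finite :=
  (Set.finite_Icc 1 (min r n)).image _

lemma compl_nonempty (n r : ℕ) : ((optSet n r)ᶜ).Nonempty :=
  ((optSet_finite n r).infinite_compl).nonempty

lemma grundy_not_mem (n r : ℕ) : grundy n r ∉ optSet n r := by
  rw [grundy_eq]
  exact Nat.sInf_mem (compl_nonempty n r)

lemma mem_of_lt_grundy {n r v : ℕ} (h : v < grundy n r) : v ∈ optSet n r := by
  by_contra hc
  rw [grundy_eq] at h
  exact absurd (Nat.sInf_le hc) (not_le.mpr h)

lemma optSet_mono {n r r' : ℕ} (h : r ≤ r') : optSet n r ⊆ optSet n r' := by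
  apply Set.image_mono
  exact Set.Icc_subset_Icc le_rfl (by omega)

lemma grundy_mono {n r r' : ℕ} (h : r ≤ r') : grundy n r ≤ grundy n r' := by
  have h1 : grundy n r' ∈ (optSet n r)ᶜ := fun hm => grundy_not_mem n r' (optSet_mono h hm)
  rw [grundy_eq n r]
  exact Nat.sInf_le h1

/-- Every value `v ≤ 𝒢(n,n)` is attained as `𝒢(j,j)` for some `j ≤ n`. -/
lemma exists_diag (n : ℕ) : ∀ v, v ≤ grundy n n → ∃ j, j ≤ n ∧ grundy j j = v := by
  induction n using Nat.strong_induction_on with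
  | _ n ih =>
    intro v hv
    rcases eq_or_lt_of_le hv with he | hlt
    · exact ⟨n, le_rfl, he.symm⟩
    · obtain ⟨k, hk, he⟩ := mem_of_lt_grundy hlt
      simp only [Set.mem_Icc, min_self] at hk
      have h1 : v ≤ grundy (n - k) (n - k) := by
        rw [← he]
        exact grundy_mono (min_le_right _ _)
      obtain ⟨j, hj, hje⟩ := ih (n - k) (by omega) v h1
      exact ⟨j, by omega, hje⟩

/-- For every positive integer `n`, `𝒢(⌈3n/2⌉) ≥ 𝒢(n) + 1`, where `𝒢(n) = 𝒢(n, n)`.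
(Here `⌈3n/2⌉ = (3n + 1) / 2` in natural-number division.) -/
theorem grundy_three_halves (n : ℕ) (hn : 0 < n) :
    grundy n n + 1 ≤ grundy ((3 * n + 1) / 2) ((3 * n + 1) / 2) := by
  set m := (3 * n + 1) / 2 with hm
  have hmn : n < m := by omega
  have h2m : 3 * n ≤ 2 * m := by omega
  -- every v ≤ grundy n n lies in optSet m m
  have key : ∀ v, v ≤ grundy n n → v ∈ optSet m m := by
    intro v hv
    obtain ⟨j, hj, hje⟩ := exists_diag n v hv
    refine ⟨m - j, ?_, ?_⟩
    · simp only [Set.mem_Icc, min_self]; omega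
    · show grundy (m - (m - j)) (min (2 * (m - j)) (m - (m - j))) = v
      have h1 : m - (m - j) = j := by omega
      have h2 : min (2 * (m - j)) j = j := by omega
      rw [h1, h2, hje]
  by_contra hc
  push_neg at hc
  exact grundy_not_mem m m (key _ (by omega))
end

section
/- For every natural number g there exists a natural number n with 𝒢(n, n) = g; that is, the function n ↦ 𝒢(n, n) is surjective onto the natural numbers. -/
namespace GrundyAux

def S (n r : ℕ) : Set ℕ :=
  {m : ℕ | ∀ k, 1 ≤ k → k ≤ min r n → grundy (n - k) (min (2 * k) (n - k)) ≠ m}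

lemma grundy_eq (n r : ℕ) : grundy n r = sInf (S n r) := by
  rw [grundy]; rfl

lemma S_nonempty (n r : ℕ) : (S n r).Nonempty := by
  classical
  set T := (Finset.Icc 1 (min r n)).image
    (fun k => grundy (n - k) (min (2 * k) (n - k))) with hT
  refine ⟨T.sup id + 1, ?_⟩
  intro k h1 h2 heq
  have hmem : grundy (n - k) (min (2 * k) (n - k)) ∈ T :=
    Finset.mem_image_of_mem _ (Finset.mem_Icc.mpr ⟨h1, h2⟩)
  have := Finset.le_sup (f := id) hmem
  simp only [id] at this
  omega

lemma grundy_mem (n r : ℕ) : grundy n r ∈ S n r := by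
  rw [grundy_eq]; exact Nat.sInf_mem (S_nonempty n r)

lemma exists_of_lt {n r u : ℕ} (h : u < grundy n r) :
    ∃ k, 1 ≤ k ∧ k ≤ min r n ∧ grundy (n - k) (min (2 * k) (n - k)) = u := by
  rw [grundy_eq] at h
  have hu : u ∉ S n r := Nat.notMem_of_lt_sInf h
  simp only [S, Set.mem_setOf_eq, not_forall] at hu
  obtain ⟨k, h1, h2, h3⟩ := hu
  exact ⟨k, h1, h2, not_ne_iff.mp h3⟩

lemma grundy_mono {n r r' : ℕ} (h : r ≤ r') : grundy n r ≤ grundy n r' := by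
  rw [grundy_eq, grundy_eq]
  apply Nat.sInf_le
  have hmem := Nat.sInf_mem (S_nonempty n r')
  intro k h1 h2
  exact hmem k h1 (le_trans h2 (by omega))

lemma downward : ∀ n u, u ≤ grundy n n → ∃ m, grundy m m = u := by
  intro n
  induction n using Nat.strong_induction_on with
  | _ n ih =>
    intro u hu
    rcases eq_or_lt_of_le hu with h | h
    · exact ⟨n, h.symm⟩
    · obtain ⟨k, h1, h2, h3⟩ := exists_of_lt h
      have hk : k ≤ n := le_trans h2 (min_le_right _ _)
      have hlt : n - k < n := by omega
      have hle : u ≤ grundy (n - k) (n - k) :=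
        h3 ▸ grundy_mono (min_le_right _ _)
      exact ih (n - k) hlt u hle

end GrundyAux

/-- For every natural number `g` there exists a natural number `n` with `𝒢(n) = g`; that is,
the function `n ↦ 𝒢(n, n)` is surjective onto the natural numbers. -/
theorem grundy_surjective : ∀ g : ℕ, ∃ n : ℕ, grundy n n = g := by
  intro g
  induction g using Nat.strong_induction_on with
  | _ g ih =>
    classical
    choose f hf using ih
    set f' : ℕ → ℕ := fun u => if h : u < g then f u h else 0 with hf'
    set M : ℕ := (Finset.range g).sup f' with hM
    set N : ℕ := 2 * M + 1 with hN
    have hfM : ∀ u, u < g → f' u ≤ M := fun u hu =>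
      Finset.le_sup (Finset.mem_range.mpr hu)
    have hfval : ∀ u (hu : u < g), grundy (f' u) (f' u) = u := by
      intro u hu
      simp only [hf', dif_pos hu]
      exact hf u hu
    have key : ∀ u, u < g → ∃ k, 1 ≤ k ∧ k ≤ min N N ∧
        grundy (N - k) (min (2 * k) (N - k)) = u := by
      intro u hu
      have h1 : f' u ≤ M := hfM u hu
      refine ⟨N - f' u, by omega, by omega, ?_⟩
      have e1 : N - (N - f' u) = f' u := by omega
      have e2 : min (2 * (N - f' u)) (f' u) = f' u := by omega
      rw [e1, e2]
      exact hfval u hu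
    have hge : g ≤ grundy N N := by
      by_contra hlt
      push_neg at hlt
      obtain ⟨k, h1, h2, h3⟩ := key (grundy N N) hlt
      exact GrundyAux.grundy_mem N N k h1 h2 h3
    exact GrundyAux.downward N g hge
end

section
/- For every natural number g ≥ 1, if h(g) denotes the least natural number n with 𝒢(n) = g (assuming it exists), then 4 · h(g) ≥ g(g − 1). -/
lemma grundy_le (n r : ℕ) : grundy n r ≤ min r n := by
  rw [grundy]
  set f : ℕ → ℕ := fun k => grundy (n - k) (min (2 * k) (n - k)) with hf
  have hcard : (Finset.image f (Finset.Icc 1 (min r n))).card ≤ min r n := by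
    calc (Finset.image f (Finset.Icc 1 (min r n))).card
        ≤ (Finset.Icc 1 (min r n)).card := Finset.card_image_le
      _ = min r n := by rw [Nat.card_Icc]; omega
  have hnot : ¬ (Finset.range (min r n + 1) ⊆ Finset.image f (Finset.Icc 1 (min r n))) := by
    intro hsub
    have := Finset.card_le_card hsub
    rw [Finset.card_range] at this
    omega
  obtain ⟨m, hm1, hm2⟩ := Finset.not_subset.mp hnot
  have hmem : m ∈ {m : ℕ | ∀ k, 1 ≤ k → k ≤ min r n →
      grundy (n - k) (min (2 * k) (n - k)) ≠ m} := by
    intro k hk1 hk2 hkeq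
    exact hm2 (Finset.mem_image.mpr ⟨k, Finset.mem_Icc.mpr ⟨hk1, hk2⟩, hkeq⟩)
  have h1 := Nat.sInf_le hmem
  have h2 : m ≤ min r n := Nat.lt_succ_iff.mp (Finset.mem_range.mp hm1)
  exact le_trans h1 h2

lemma grundy_exists (n r g' : ℕ) (h : g' < grundy n r) :
    ∃ k, 1 ≤ k ∧ k ≤ min r n ∧ grundy (n - k) (min (2 * k) (n - k)) = g' := by
  rw [grundy] at h
  have hm := Nat.notMem_of_lt_sInf h
  simp only [Set.mem_setOf_eq] at hm
  push_neg at hm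
  obtain ⟨k, hk1, hk2, hk3⟩ := hm
  exact ⟨k, hk1, hk2, hk3⟩

lemma grundy_bound : ∀ g n r, grundy n r = g → g * (g - 1) ≤ 4 * n := by
  intro g
  induction g with
  | zero => intro n r _; simp
  | succ g' ih =>
    intro n r hg
    obtain ⟨k, hk1, hk2, hk3⟩ := grundy_exists n r g' (by omega)
    have hle := grundy_le (n - k) (min (2 * k) (n - k))
    rw [hk3] at hle
    have h2k : g' ≤ 2 * k := by omega
    have hkn : k ≤ n := le_trans hk2 (min_le_right _ _)
    have hprev := ih (n - k) _ hk3
    match g' with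
    | 0 => omega
    | m + 1 =>
      have e1 : (m + 1 + 1) * (m + 1 + 1 - 1) = (m + 1) * (m + 1 - 1) + 2 * (m + 1) := by
        simp; ring
      rw [e1]
      calc (m + 1) * (m + 1 - 1) + 2 * (m + 1)
          ≤ 4 * (n - k) + 4 * k := Nat.add_le_add hprev (by omega)
        _ = 4 * n := by omega

/-- For every natural number `g ≥ 1`, if `h` is the least natural number `n` with
`𝒢(n) = g`, then `4 * h ≥ g * (g - 1)`. -/
theorem grundy_first_occurrence_lower_bound (g h : ℕ) (hg : 1 ≤ g)
    (hh : IsLeast {x : ℕ | grundy x x = g} h) :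
    g * (g - 1) ≤ 4 * h := by
  exact grundy_bound g h h hh.1
end
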